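/- The datagram FEP construction satisfies datagram channel length regularity: for any two n-length sequences M^0 and M^1 of elements of M_ℓin ∪ {⊤} such that for every i either |M^0_i| = |M^1_i| or M^0_i = M^1_i = ⊤, and any n-length integer sequence P, if C^0_i and C^1_i denote the ciphertexts produced by calling Send sequentially for i = 1..n (threading the state from Init) on inputs (M^0_i, P_i) and (M^1_i, P_i) respectively, then for every i either |C^0_i| = |C^1_i| or C^0_i = C^1_i = ⊥. -/

import Mathlib

/-! Byte strings -/

abbrev Byte := Fin 256
abbrev Bytes := List Byte

def byte (n : ℕ) : Byte := ⟨n % 256, Nat.mod_lt n (by norm_num)⟩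
def b0 : Byte := byte 0
def b1 : Byte := byte 1

/-- Two-byte (big-endian) encoding of a natural number. -/
def enc2 (n : ℕ) : Bytes := [byte (n / 256), byte n]

/-- Decode the first two bytes of a byte string as a big-endian natural number. -/
def dec2 : Bytes → ℕ
  | a :: b :: _ => 256 * a.val + b.val
  | _ => 0

/-- A nonce-based AEAD scheme on byte strings where `Enc` carries the
`ℓ_Nonce`-byte nonce as a prefix of the ciphertext and `Dec` reads the nonce
from its input, with perfect correctness, length additivity (overhead
`ℓ_Nonce + ℓ_Tag`), and soundness of decryption. -/
structure DAEAD where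
  Key : Type
  lNonce : ℕ
  lTag : ℕ
  Enc : Key → Bytes → Bytes → Bytes
  Dec : Key → Bytes → Option Bytes
  correct : ∀ k n m, n.length = lNonce → Dec k (Enc k n m) = some m
  lenAdd : ∀ k n m, n.length = lNonce → (Enc k n m).length = m.length + (lNonce + lTag)
  decSound : ∀ k c m, Dec k c = some m → ∃ n, n.length = lNonce ∧ c = Enc k n m

/-- `ℓ_Overhead = ℓ_Nonce + ℓ_Tag`. -/
def DAEAD.lOver (A : DAEAD) : ℕ := A.lNonce + A.lTag
/-- `ℓ_out = 65507`, the maximum size of a UDP payload. -/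
def lOut : ℕ := 65507
/-- `ℓ_in = ℓ_out − ℓ_Overhead − 3`, the maximum input message length. -/
def lIn (A : DAEAD) : ℕ := lOut - A.lOver - 3
/-- `ℓ_null = 1 + ℓ_Overhead`, the length of a ciphertext of the null message. -/
def lNull (A : DAEAD) : ℕ := 1 + A.lOver

/-- `Rand(p)`: `p` bytes read off a random tape `T`. -/
def rand (T : ℕ → Byte) (p : ℕ) : Bytes := (List.range p).map T

/-- A datagram `Send` input message: `none` is the null message `⊤`, and
`some msg` is an ordinary message `msg ∈ M_ℓin` (when `|msg| ≤ ℓ_in`). -/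
abbrev DMsg := Option Bytes

/-- A datagram `Recv` output: a message, the null message `⊤`, or the error `⊥`. -/
inductive DOut where
  | msg (m : Bytes)
  | top
  | bot
deriving DecidableEq

/-- `Send(k, m, p)` of the datagram FEP construction, using the fresh random
nonce `nonce` and the random tape `T` (for `Rand`); the output `none` is the
error `⊥`. -/
def dsend (A : DAEAD) (k : A.Key) (nonce : Bytes) (T : ℕ → Byte)
    (m : DMsg) (p : ℤ) : Option Bytes :=
  match m with
  | none =>
    if p < 0 then some (A.Enc k nonce [b0])
    else if p < (lNull A : ℤ) then some (rand T p.toNat)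
    else if p ≤ (lOut : ℤ) then
      some (A.Enc k nonce (b0 :: List.replicate (p.toNat - lNull A) b0))
    else none
  | some msg =>
    if p < 0 then
      if msg.length ≤ lIn A then
        some (A.Enc k nonce (b1 :: (enc2 msg.length ++ msg)))
      else none
    else if (lOut : ℤ) < p ∨ p - (A.lOver : ℤ) - 3 < (msg.length : ℤ) then none
    else
      some (A.Enc k nonce
        (b1 :: (enc2 msg.length ++
          List.replicate (p.toNat - msg.length - A.lOver - 3) b0 ++ msg)))

/-- `Recv(k, c)` of the datagram FEP construction. -/
def drecv (A : DAEAD) (k : A.Key) (c : Bytes) : DOut :=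
  if c.length < lNull A then DOut.top
  else
    match A.Dec k c with
    | none => DOut.bot
    | some buf =>
      if buf.headD b0 = b0 then DOut.top
      else DOut.msg (buf.drop (buf.length - dec2 (buf.drop 1)))

/-! Which branch of `Send` is taken depends only on `p` and `|m|` (the test `|m| ≤ ℓ_in` for
`p < 0` agrees on messages of equal length), and by length additivity the ciphertext length in
each branch is a function of `p`, `|m|` and `ℓ_Overhead`, whatever the nonce and random bytes. -/

theorem Option.map_eq_map_cases {α β : Type*} {f : α → β} {a b : Option α}
    (h : a.map f = b.map f) :
    (a = none ∧ b = none) ∨ ∃ x y, a = some x ∧ b = some y ∧ f x = f y := by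
  cases a <;> cases b <;> simp_all

theorem map_length_dsend_eq (A : DAEAD) (k : A.Key) {nonce nonce' : Bytes} (T T' : ℕ → Byte)
    (hn : nonce.length = A.lNonce) (hn' : nonce'.length = A.lNonce) {m m' : DMsg}
    (hm : m.map List.length = m'.map List.length) (p : ℤ) :
    (dsend A k nonce T m p).map List.length = (dsend A k nonce' T' m' p).map List.length := by
  cases m with
  | none =>
    obtain rfl : m' = none := by simpa using hm.symm
    simp only [dsend]
    split_ifs <;> simp [A.lenAdd _ _ _ hn, A.lenAdd _ _ _ hn', rand]
  | some msg =>
    obtain ⟨msg', rfl, hlen⟩ : ∃ msg', m' = some msg' ∧ msg.length = msg'.length := by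
      cases m' <;> simp_all
    simp only [dsend, hlen]
    split_ifs <;> simp [A.lenAdd _ _ _ hn, A.lenAdd _ _ _ hn', enc2, hlen]

/-- The datagram FEP construction satisfies datagram channel
length regularity: for any two `n`-length sequences `M⁰` and `M¹` of elements
of `M_ℓin ∪ {⊤}` such that for every `i` either `|M⁰ᵢ| = |M¹ᵢ|` or
`M⁰ᵢ = M¹ᵢ = ⊤`, any `n`-length integer sequence `P`, and any choice of the
random nonces and random bytes for each call, the ciphertexts `C⁰ᵢ` and `C¹ᵢ`
produced by calling `Send` sequentially for `i = 1..n` (threading the state,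
which is the key `k` from `Init`, since the construction is stateless) on
inputs `(M⁰ᵢ, Pᵢ)` and `(M¹ᵢ, Pᵢ)` respectively satisfy, for every `i`, either
`|C⁰ᵢ| = |C¹ᵢ|` or `C⁰ᵢ = C¹ᵢ = ⊥`. -/
theorem stmt14 (A : DAEAD) (k : A.Key) (n : ℕ)
    (M0 M1 : Fin n → DMsg) (P : Fin n → ℤ)
    (N0 N1 : Fin n → Bytes) (T0 T1 : Fin n → ℕ → Byte)
    (hN0 : ∀ i, (N0 i).length = A.lNonce) (hN1 : ∀ i, (N1 i).length = A.lNonce)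
    (hM : ∀ i, (M0 i = none ∧ M1 i = none) ∨
      ∃ m0 m1 : Bytes, M0 i = some m0 ∧ M1 i = some m1 ∧
        m0.length ≤ lIn A ∧ m1.length ≤ lIn A ∧ m0.length = m1.length) :
    ∀ i,
      (dsend A k (N0 i) (T0 i) (M0 i) (P i) = none ∧
        dsend A k (N1 i) (T1 i) (M1 i) (P i) = none) ∨
      ∃ c0 c1 : Bytes,
        dsend A k (N0 i) (T0 i) (M0 i) (P i) = some c0 ∧
        dsend A k (N1 i) (T1 i) (M1 i) (P i) = some c1 ∧
        c0.length = c1.length := by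
  intro i
  have hm : (M0 i).map List.length = (M1 i).map List.length := by
    rcases hM i with ⟨h0, h1⟩ | ⟨m0, m1, h0, h1, -, -, hlen⟩ <;> simp [*]
  exact Option.map_eq_map_cases (map_length_dsend_eq A k (T0 i) (T1 i) (hN0 i) (hN1 i) hm (P i))
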